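/- arXiv:1507.04033 — 7 statements merged into one kernel-verified Lean document; each statement's English description precedes it below -/
import Mathlib

section
/- If 0 < γ ≤ β ≤ α < π and α + β + γ < π (so the hyperbolic triangle with angles α, β, γ exists and γ is not the unique greatest angle), then the hyperbolic triangle satisfies a + b > c + h, where a, b, c are the side lengths opposite α, β, γ respectively and h is the altitude to side c. In trigonometric form: with cosh a = (cos β cos γ + cos α)/(sin β sin γ), cosh b = (cos α cos γ + cos β)/(sin α sin γ), cosh c = (cos α cos β + cos γ)/(sin α sin β), and sinh h = sinh b · sin α, one has a + b > c + h. -/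
open Real

set_option maxHeartbeats 1000000 in

lemma W_half (p q r : ℝ) (hr : 0 < r) (hrq : r ≤ q) (hqp : q ≤ p)
    (hsum : p + q + r < π / 2) :
    (Real.cos (2*r) - Real.cos (2*p)) * (Real.cos (2*r) - Real.cos (2*q))
      < (1 + Real.cos (2*p)) * (1 + Real.cos (2*q)) * (1 - Real.sin (2*r)) := by
  have hq : 0 < q := hr.trans_le hrq
  have hp : 0 < p := hq.trans_le hqp
  have hp2 : p < π/2 := by linarith
  have hq2 : q < π/2 := by linarith
  have hr6 : r < π/6 := by linarith
  have hpi6 : π/6 ≤ π/2 := by nlinarith [pi_pos]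
  -- pythagorean
  have pyP := sin_sq_add_cos_sq p
  have pyQ := sin_sq_add_cos_sq q
  have pyR := sin_sq_add_cos_sq r
  have f1 : Real.cos (2*r) - Real.cos (2*p) = 2 * Real.sin (p+r) * Real.sin (p-r) := by
    rw [Real.cos_two_mul' , Real.cos_two_mul' , Real.sin_add, Real.sin_sub]
    linear_combination (1 - 2*Real.sin p^2)*pyR + (2*Real.sin r^2 - 1)*pyP
  have f2 : Real.cos (2*r) - Real.cos (2*q) = 2 * Real.sin (q+r) * Real.sin (q-r) := by
    rw [Real.cos_two_mul' , Real.cos_two_mul' , Real.sin_add, Real.sin_sub]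
    linear_combination (1 - 2*Real.sin q^2)*pyR + (2*Real.sin r^2 - 1)*pyQ
  have f3 : 1 + Real.cos (2*p) = 2 * Real.cos p ^ 2 := by
    rw [Real.cos_two_mul]; ring
  have f4 : 1 + Real.cos (2*q) = 2 * Real.cos q ^ 2 := by
    rw [Real.cos_two_mul]; ring
  have b1 : Real.sin (p+r) < Real.cos q := by
    have : Real.sin (p+r) < Real.sin (π/2 - q) := by
      apply sin_lt_sin_of_lt_of_le_pi_div_two (by linarith) (by linarith) (by linarith)
    rwa [Real.sin_pi_div_two_sub] at this
  have b2 : Real.sin (q+r) < Real.cos p := by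
    have : Real.sin (q+r) < Real.sin (π/2 - p) := by
      apply sin_lt_sin_of_lt_of_le_pi_div_two (by linarith) (by linarith) (by linarith)
    rwa [Real.sin_pi_div_two_sub] at this
  have nnA : 0 ≤ Real.sin (p+r) := sin_nonneg_of_nonneg_of_le_pi (by linarith) (by linarith [pi_pos])
  have nnC : 0 ≤ Real.sin (q+r) := sin_nonneg_of_nonneg_of_le_pi (by linarith) (by linarith [pi_pos])
  have nnB : 0 ≤ Real.sin (p-r) := sin_nonneg_of_nonneg_of_le_pi (by linarith) (by linarith [pi_pos])
  have nnE : 0 ≤ Real.sin (q-r) := sin_nonneg_of_nonneg_of_le_pi (by linarith) (by linarith [pi_pos])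
  have cp : 0 < Real.cos p := Real.cos_pos_of_mem_Ioo ⟨by linarith, hp2⟩
  have cq : 0 < Real.cos q := Real.cos_pos_of_mem_Ioo ⟨by linarith, hq2⟩
  -- core inequality
  have i1 : Real.cos (p-q) - Real.cos (p+q-2*r) = 2 * Real.sin (p-r) * Real.sin (q-r) := by
    have h := Real.cos_sub_cos (p-q) (p+q-2*r)
    rw [show (p-q + (p+q-2*r))/2 = p - r by ring, show ((p-q) - (p+q-2*r))/2 = -(q - r) by ring,
      Real.sin_neg] at h
    linarith
  have i2 : Real.cos (p-q) + Real.cos (p+q) = 2 * Real.cos p * Real.cos q := by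
    rw [Real.cos_add, Real.cos_sub]; ring
  have j1 : Real.sin r < Real.cos (p+q) := by
    have : Real.cos (p+q) > Real.cos (π/2 - r) := by
      apply cos_lt_cos_of_nonneg_of_le_pi (by linarith) (by linarith [pi_pos]) (by linarith)
    rwa [Real.cos_pi_div_two_sub] at this
  have j2 : Real.sin (3*r) < Real.cos (p+q-2*r) := by
    have : Real.cos (p+q-2*r) > Real.cos (π/2 - 3*r) := by
      apply cos_lt_cos_of_nonneg_of_le_pi (by linarith) (by linarith [pi_pos]) (by linarith)
    rwa [Real.cos_pi_div_two_sub] at this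
  have j6 : Real.sin (3*r) = Real.sin (2*r) * Real.cos r + Real.cos (2*r) * Real.sin r := by
    rw [show (3:ℝ)*r = 2*r + r by ring, Real.sin_add]
  have j7 : Real.sin (2*r) = 2 * Real.sin r * Real.cos r := Real.sin_two_mul r
  have j7' : Real.cos (2*r) = 1 - 2 * Real.sin r ^ 2 := by
    rw [Real.cos_two_mul']; linear_combination pyR
  have j3 : Real.cos (p-q) ≤ 1 := Real.cos_le_one _
  have j4 : Real.sin (2*r) ≤ 1 := Real.sin_le_one _
  have srpos : 0 < Real.sin r := Real.sin_pos_of_pos_of_lt_pi hr (by linarith [pi_pos])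
  have crpos : 0 < Real.cos r := Real.cos_pos_of_mem_Ioo ⟨by linarith, by linarith⟩
  have hcr : Real.sqrt 3 / 2 ≤ Real.cos r := by
    rw [← Real.cos_pi_div_six]
    exact Real.cos_le_cos_of_nonneg_of_le_pi hr.le (by linarith [pi_pos]) hr6.le
  have hsqrt3 : (1.7:ℝ) ≤ Real.sqrt 3 :=
    Real.le_sqrt_of_sq_le (by norm_num)
  have hcr2 : (3:ℝ)/4 ≤ Real.cos r ^ 2 := by
    calc (3:ℝ)/4 = (Real.sqrt 3/2)^2 := by
          rw [div_pow, Real.sq_sqrt (by norm_num : (0:ℝ) ≤ 3)]; norm_num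
      _ ≤ Real.cos r ^ 2 := by gcongr
  have hsr : Real.sin r ≤ 1/2 := by nlinarith [pyR, srpos]
  have j8 : 2 * Real.cos r - Real.sin r ≥ 1 := by linarith
  have t1 : 0 ≤ (1 - Real.sin (2*r)) * (Real.cos (p+q) - Real.sin r) :=
    mul_nonneg (by linarith) (by linarith)
  have t2 : 0 ≤ 2*Real.sin r*Real.cos r*(2*Real.cos r - Real.sin r - Real.cos (p-q)) :=
    mul_nonneg (by positivity) (by linarith)
  have t3 : 0 < Real.cos (p+q-2*r) - (Real.sin (2*r)*Real.cos r + Real.cos (2*r)*Real.sin r) := by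
    rw [← j6]; linarith
  have key : Real.cos p * Real.cos q * (1 - Real.sin (2*r)) - Real.sin (p-r) * Real.sin (q-r)
      = ((1 - Real.sin (2*r)) * (Real.cos (p+q) - Real.sin r)
        + 2*Real.sin r*Real.cos r*(2*Real.cos r - Real.sin r - Real.cos (p-q))
        + (Real.cos (p+q-2*r) - (Real.sin (2*r)*Real.cos r + Real.cos (2*r)*Real.sin r))) / 2 := by
    linear_combination (1/2) * i1 - ((1 - Real.sin (2*r))/2) * i2
      + ((Real.cos r - Real.sin r - Real.cos (p-q))/2) * j7 + (Real.sin r/2) * j7'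
      + (-(Real.sin r)) * pyR
  have core : Real.sin (p-r) * Real.sin (q-r) < Real.cos p * Real.cos q * (1 - Real.sin (2*r)) := by
    linarith
  have s1 : Real.sin (p+r) * Real.sin (q+r) ≤ Real.cos q * Real.cos p :=
    mul_le_mul b1.le b2.le nnC cq.le
  have nnBE : 0 ≤ Real.sin (p-r) * Real.sin (q-r) := mul_nonneg nnB nnE
  have cpq : 0 < Real.cos q * Real.cos p := mul_pos cq cp
  rw [f1, f2, f3, f4]
  calc 2 * Real.sin (p+r) * Real.sin (p-r) * (2 * Real.sin (q+r) * Real.sin (q-r))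
      = 4 * (Real.sin (p+r) * Real.sin (q+r)) * (Real.sin (p-r) * Real.sin (q-r)) := by ring
    _ ≤ 4 * (Real.cos q * Real.cos p) * (Real.sin (p-r) * Real.sin (q-r)) := by
        apply mul_le_mul_of_nonneg_right _ nnBE
        linarith
    _ < 4 * (Real.cos q * Real.cos p) * (Real.cos p * Real.cos q * (1 - Real.sin (2*r))) := by
        apply mul_lt_mul_of_pos_left core (by linarith)
    _ = 2 * Real.cos p ^ 2 * (2 * Real.cos q ^ 2) * (1 - Real.sin (2*r)) := by ring

set_option maxHeartbeats 1000000 in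

lemma eq_of_sq_eq_sq'' {x y : ℝ} (hx : 0 ≤ x) (hy : 0 ≤ y) (h : x^2 = y^2) : x = y := by
  apply le_antisymm <;> nlinarith

set_option maxHeartbeats 1000000 in
theorem strong_triangle_ineq_of_not_unique_greatest
    (α β γ a b c h : ℝ)
    (hγ : 0 < γ) (hγβ : γ ≤ β) (hβα : β ≤ α) (hα : α < π)
    (hsum : α + β + γ < π)
    (ha : 0 ≤ a) (hb : 0 ≤ b) (hc : 0 ≤ c) (hh : 0 ≤ h)
    (hcosha : Real.cosh a = (Real.cos β * Real.cos γ + Real.cos α) / (Real.sin β * Real.sin γ))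
    (hcoshb : Real.cosh b = (Real.cos α * Real.cos γ + Real.cos β) / (Real.sin α * Real.sin γ))
    (hcoshc : Real.cosh c = (Real.cos α * Real.cos β + Real.cos γ) / (Real.sin α * Real.sin β))
    (hsinhh : Real.sinh h = Real.sinh b * Real.sin α) :
    a + b > c + h := by
  have hβ : 0 < β := hγ.trans_le hγβ
  have hα0 : 0 < α := hβ.trans_le hβα
  have hβπ : β < π := lt_of_le_of_lt hβα hα
  have hγπ : γ < π := lt_of_le_of_lt hγβ hβπ
  have sa : 0 < Real.sin α := Real.sin_pos_of_pos_of_lt_pi hα0 hα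
  have sb : 0 < Real.sin β := Real.sin_pos_of_pos_of_lt_pi hβ hβπ
  have sg : 0 < Real.sin γ := Real.sin_pos_of_pos_of_lt_pi hγ hγπ
  have pyA := Real.sin_sq_add_cos_sq α
  have pyB := Real.sin_sq_add_cos_sq β
  have pyG := Real.sin_sq_add_cos_sq γ
  -- cosh a > 1 hence a > 0
  have hnum : Real.sin β * Real.sin γ < Real.cos β * Real.cos γ + Real.cos α := by
    have h1 : Real.cos (π - (β + γ)) < Real.cos α :=
      Real.cos_lt_cos_of_nonneg_of_le_pi hα0.le (by linarith) (by linarith)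
    rw [Real.cos_pi_sub, Real.cos_add] at h1
    linarith
  have hcosha1 : 1 < Real.cosh a := by
    rw [hcosha, lt_div_iff₀ (by positivity)]
    linarith
  have hapos : 0 < a := lt_of_le_of_ne ha (Ne.symm (Real.one_lt_cosh.mp hcosha1))
  have hsinha : 0 < Real.sinh a := Real.sinh_pos_iff.mpr hapos
  set k := Real.sinh a / Real.sin α with hk_def
  have hk : 0 < k := div_pos hsinha sa
  have hka : Real.sinh a = k * Real.sin α := by rw [hk_def, div_mul_cancel₀ _ sa.ne']
  have hk2 : k ^ 2 * (Real.sin α ^ 2 * Real.sin β ^ 2 * Real.sin γ ^ 2)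
      = Real.cos α ^ 2 + Real.cos β ^ 2 + Real.cos γ ^ 2
        + 2 * Real.cos α * Real.cos β * Real.cos γ - 1 := by
    have h1 : Real.sinh a ^ 2 = Real.cosh a ^ 2 - 1 := by rw [Real.cosh_sq]; ring
    have h2 : k ^ 2 * Real.sin α ^ 2 = Real.cosh a ^ 2 - 1 := by
      rw [← h1, hka]; ring
    rw [hcosha] at h2
    field_simp at h2
    linear_combination h2 - Real.sin γ^2 * pyB - (1 - Real.cos β^2) * pyG
  have hsinhb : Real.sinh b = k * Real.sin β := by
    apply eq_of_sq_eq_sq'' (Real.sinh_nonneg_iff.mpr hb) (by positivity)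
    have h1 : Real.sinh b ^ 2 = Real.cosh b ^ 2 - 1 := by rw [Real.cosh_sq]; ring
    rw [h1, hcoshb, div_pow, div_sub_one (by positivity), div_eq_iff (by positivity)]
    linear_combination -hk2 - Real.sin γ^2 * pyA - (1 - Real.cos α^2) * pyG
  have hsinhc : Real.sinh c = k * Real.sin γ := by
    apply eq_of_sq_eq_sq'' (Real.sinh_nonneg_iff.mpr hc) (by positivity)
    have h1 : Real.sinh c ^ 2 = Real.cosh c ^ 2 - 1 := by rw [Real.cosh_sq]; ring
    rw [h1, hcoshc, div_pow, div_sub_one (by positivity), div_eq_iff (by positivity)]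
    linear_combination -hk2 - Real.sin β^2 * pyA - (1 - Real.cos α^2) * pyB
  have hfin : h < a + b - c := by
    rw [← Real.sinh_lt_sinh, Real.sinh_sub, Real.sinh_add, Real.cosh_add,
      hsinhh, hsinhb, hka, hsinhc, hcosha, hcoshb, hcoshc]
    have key : (k * Real.sin α * ((Real.cos α * Real.cos γ + Real.cos β) / (Real.sin α * Real.sin γ)) +
          (Real.cos β * Real.cos γ + Real.cos α) / (Real.sin β * Real.sin γ) * (k * Real.sin β)) *
        ((Real.cos α * Real.cos β + Real.cos γ) / (Real.sin α * Real.sin β)) -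
      ((Real.cos β * Real.cos γ + Real.cos α) / (Real.sin β * Real.sin γ) *
            ((Real.cos α * Real.cos γ + Real.cos β) / (Real.sin α * Real.sin γ)) +
          k * Real.sin α * (k * Real.sin β)) * (k * Real.sin γ) - k * Real.sin β * Real.sin α
        = k * ((1 - Real.cos α) * (1 - Real.cos β) *
            ((1 + Real.cos α) * (1 + Real.cos β) * (1 - Real.sin γ)
              - (Real.cos γ - Real.cos α) * (Real.cos γ - Real.cos β)))
            / (Real.sin α * Real.sin β * Real.sin γ) := by
      rw [eq_div_iff (by positivity)]
      field_simp
      linear_combination (norm := ring)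
        (-1) * hk2
        + (-(Real.sin γ*(1-Real.cos β^2))) * pyA
        + (-(Real.sin γ*Real.sin α^2)) * pyB
    have hca1 : Real.cos α < 1 := by
      have := Real.cos_lt_cos_of_nonneg_of_le_pi (le_refl 0) hα.le hα0
      rwa [Real.cos_zero] at this
    have hcb1 : Real.cos β < 1 := by
      have := Real.cos_lt_cos_of_nonneg_of_le_pi (le_refl 0) hβπ.le hβ
      rwa [Real.cos_zero] at this
    have hW : (Real.cos γ - Real.cos α) * (Real.cos γ - Real.cos β)
        < (1 + Real.cos α) * (1 + Real.cos β) * (1 - Real.sin γ) := by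
      have := W_half (α/2) (β/2) (γ/2) (by linarith) (by linarith) (by linarith) (by linarith)
      rw [show 2*(α/2) = α by ring, show 2*(β/2) = β by ring, show 2*(γ/2) = γ by ring] at this
      linarith
    have hposres : 0 < k * ((1 - Real.cos α) * (1 - Real.cos β) *
            ((1 + Real.cos α) * (1 + Real.cos β) * (1 - Real.sin γ)
              - (Real.cos γ - Real.cos α) * (Real.cos γ - Real.cos β)))
            / (Real.sin α * Real.sin β * Real.sin γ) := by
      apply div_pos _ (by positivity)
      apply mul_pos hk
      apply mul_pos (mul_pos (by linarith) (by linarith))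
      linarith
    linarith [key, hposres]
  linarith
end

section
/- If γ ≥ π/2 in a hyperbolic triangle, then the strong triangle inequality fails: a + b ≤ c + h. Concretely, for a, b, h > 0, c ≥ 0 with cosh c = cosh a cosh b − sinh a sinh b cos γ, sinh c sinh h = sinh a sinh b sin γ, and π/2 ≤ γ ≤ π, one has cosh(c + h) ≥ cosh(a + b), hence c + h ≥ a + b. -/
open Real

theorem strong_triangle_ineq_fails_of_obtuse (a b c h γ : ℝ)
    (ha : 0 < a) (hb : 0 < b) (hh : 0 < h) (hc : 0 ≤ c)
    (hlawcos : Real.cosh c = Real.cosh a * Real.cosh b - Real.sinh a * Real.sinh b * Real.cos γ)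
    (harea : Real.sinh c * Real.sinh h = Real.sinh a * Real.sinh b * Real.sin γ)
    (hγ1 : π / 2 ≤ γ) (hγ2 : γ ≤ π) :
    Real.cosh (a + b) ≤ Real.cosh (c + h) ∧ a + b ≤ c + h := by
  have hS : 0 < Real.sinh a * Real.sinh b :=
    mul_pos (Real.sinh_pos_iff.2 ha) (Real.sinh_pos_iff.2 hb)
  have hsin : 0 ≤ Real.sin γ := Real.sin_nonneg_of_nonneg_of_le_pi
    (le_trans (by positivity) hγ1) hγ2
  have hcos : Real.cos γ ≤ 0 := Real.cos_nonpos_of_pi_div_two_le_of_le hγ1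
    (by linarith [Real.pi_pos])
  -- sin γ - cos γ ≥ 1
  have hx : 0 ≤ Real.sin γ - Real.cos γ := by linarith
  have hsq : 1 ≤ (Real.sin γ - Real.cos γ) ^ 2 := by
    have := Real.sin_sq_add_cos_sq γ
    nlinarith [mul_nonneg hsin (neg_nonneg.2 hcos)]
  have h1 : 1 ≤ Real.sin γ - Real.cos γ := by nlinarith
  have hcoshh : 1 ≤ Real.cosh h := Real.one_le_cosh h
  have hcoshc : 0 < Real.cosh c := Real.cosh_pos c
  have hmain : Real.cosh (a + b) ≤ Real.cosh (c + h) := by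
    rw [Real.cosh_add, Real.cosh_add, harea]
    have : Real.cosh c ≤ Real.cosh c * Real.cosh h := le_mul_of_one_le_right hcoshc.le hcoshh
    nlinarith [Real.sinh_pos_iff.2 ha, Real.sinh_pos_iff.2 hb]
  refine ⟨hmain, ?_⟩
  have := Real.cosh_le_cosh.1 hmain
  rwa [abs_of_nonneg (by linarith), abs_of_nonneg (by linarith)] at this
end

section
/- A hyperbolic triangle satisfies a + b > c + h if and only if (cos α cos β + cos γ)/(cos γ + 1 − sin γ) − 1 < cosh h; moreover equality a + b = c + h holds if and only if the left side equals cosh h. Equivalently: under the hypotheses cosh c = cosh a cosh b − sinh a sinh b cos γ, cosh c · sin α sin β = cos α cos β + cos γ, sinh h = sinh a sin β = sinh b sin α, sinh c sinh h = sinh a sinh b sin γ, with a, b, c, h > 0 and 0 < γ < π/2, one has cosh(a+b) > cosh(c+h) ⟺ cos α cos β + cos γ < (1 + cosh h)(cos γ + 1 − sin γ). -/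
open Real

set_option maxHeartbeats 1000000 in
theorem strong_triangle_ineq_iff (a b c h α β γ : ℝ)
    (ha : 0 < a) (hb : 0 < b) (hc : 0 < c) (hh : 0 < h)
    (hγ0 : 0 < γ) (hγ : γ < π / 2)
    (hlawcos : Real.cosh c = Real.cosh a * Real.cosh b - Real.sinh a * Real.sinh b * Real.cos γ)
    (hduallawcos : Real.cosh c * (Real.sin α * Real.sin β) = Real.cos α * Real.cos β + Real.cos γ)
    (hh1 : Real.sinh h = Real.sinh a * Real.sin β)
    (hh2 : Real.sinh h = Real.sinh b * Real.sin α)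
    (harea : Real.sinh c * Real.sinh h = Real.sinh a * Real.sinh b * Real.sin γ) :
    (a + b > c + h ↔
      (Real.cos α * Real.cos β + Real.cos γ) / (Real.cos γ + 1 - Real.sin γ) - 1 < Real.cosh h)
    ∧ (a + b = c + h ↔
      (Real.cos α * Real.cos β + Real.cos γ) / (Real.cos γ + 1 - Real.sin γ) - 1 = Real.cosh h) := by
  set P := Real.cos α * Real.cos β + Real.cos γ with hPdef
  set D := Real.cos γ + 1 - Real.sin γ with hDdef
  have hcos : 0 < Real.cos γ := Real.cos_pos_of_mem_Ioo ⟨by linarith [Real.pi_pos], hγ⟩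
  have hD : 0 < D := by have := Real.sin_le_one γ; simp only [hDdef]; linarith
  have hsh : 0 < Real.sinh h := Real.sinh_pos_iff.mpr hh
  have hsa : 0 < Real.sinh a := Real.sinh_pos_iff.mpr ha
  have hsb : 0 < Real.sinh b := Real.sinh_pos_iff.mpr hb
  have hsα : 0 < Real.sin α := by nlinarith
  have hsβ : 0 < Real.sin β := by nlinarith
  have hP : 0 < P := by rw [← hduallawcos]; positivity
  have hch : 1 < Real.cosh h := Real.one_lt_cosh.mpr hh.ne'
  have hsq : Real.sinh a * Real.sinh b * (Real.sin α * Real.sin β) = Real.cosh h ^ 2 - 1 := by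
    have h1 : Real.cosh h ^ 2 = Real.sinh h ^ 2 + 1 := Real.cosh_sq h
    nlinarith [hh1, hh2]
  have hd1 : Real.cosh (a + b) = Real.cosh c + Real.sinh a * Real.sinh b * (1 + Real.cos γ) := by
    rw [Real.cosh_add, hlawcos]; ring
  have hd2 : Real.cosh (c + h) = Real.cosh c * Real.cosh h + Real.sinh a * Real.sinh b * Real.sin γ := by
    rw [Real.cosh_add, harea]
  have hkey : (Real.cosh (a + b) - Real.cosh (c + h)) * P =
      Real.cosh c * (Real.cosh h - 1) * ((Real.cosh h + 1) * D - P) := by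
    rw [hd1, hd2, hDdef]
    linear_combination (-(Real.sinh a * Real.sinh b * (Real.cos γ + 1 - Real.sin γ))) * hduallawcos
      + (Real.cosh c * (Real.cos γ + 1 - Real.sin γ)) * hsq
  have hccpos : 0 < Real.cosh c := Real.cosh_pos c
  have hfac : 0 < Real.cosh c * (Real.cosh h - 1) := by nlinarith
  have hmono : a + b > c + h ↔ Real.cosh (c + h) < Real.cosh (a + b) := by
    rw [Real.cosh_lt_cosh, abs_of_pos (by linarith), abs_of_pos (by linarith)]
  have hinj : a + b = c + h ↔ Real.cosh (a + b) = Real.cosh (c + h) := by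
    constructor
    · intro e; rw [e]
    · intro e
      rcases lt_trichotomy (a + b) (c + h) with hlt | heq | hgt
      · exfalso
        have : Real.cosh (a + b) < Real.cosh (c + h) := by
          rw [Real.cosh_lt_cosh, abs_of_pos (by linarith), abs_of_pos (by linarith)]; exact hlt
        linarith
      · exact heq
      · exfalso
        have : Real.cosh (c + h) < Real.cosh (a + b) := hmono.mp hgt
        linarith
  have hiff1 : (P / D - 1 < Real.cosh h) ↔ P < (Real.cosh h + 1) * D := by
    rw [sub_lt_iff_lt_add, div_lt_iff₀ hD]
  have hiff2 : (P / D - 1 = Real.cosh h) ↔ P = (Real.cosh h + 1) * D := by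
    rw [sub_eq_iff_eq_add, div_eq_iff hD.ne']
  constructor
  · rw [hmono, hiff1]
    constructor
    · intro hlt
      have h0 : 0 < Real.cosh c * (Real.cosh h - 1) * ((Real.cosh h + 1) * D - P) :=
        hkey ▸ mul_pos (sub_pos.mpr hlt) hP
      have hX : 0 < (Real.cosh h + 1) * D - P := (mul_pos_iff_of_pos_left hfac).mp h0
      linarith
    · intro hlt
      have hX : 0 < (Real.cosh h + 1) * D - P := by linarith
      have h0 : 0 < (Real.cosh (a + b) - Real.cosh (c + h)) * P := by
        rw [hkey]; exact mul_pos hfac hX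
      have hd : 0 < Real.cosh (a + b) - Real.cosh (c + h) := (mul_pos_iff_of_pos_right hP).mp h0
      linarith
  · rw [hinj, hiff2]
    constructor
    · intro he
      have h0 : (Real.cosh (a + b) - Real.cosh (c + h)) * P = 0 := by rw [he]; ring
      rw [hkey] at h0
      rcases mul_eq_zero.mp h0 with h1 | h2
      · exact absurd h1 hfac.ne'
      · linarith
    · intro he
      have h0 : (Real.cosh (a + b) - Real.cosh (c + h)) * P = 0 := by
        rw [hkey, he, sub_self, mul_zero]
      rcases mul_eq_zero.mp h0 with h1 | h2
      · linarith
      · exact absurd h2 hP.ne'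
end

section
/- If 0 < α ≤ β < γ < π/2, then (cos α cos β + cos γ)/(cos γ + 1 − sin γ) > 1. -/
open Real

theorem ratio_gt_one (α β γ : ℝ)
    (hα : 0 < α) (hαβ : α ≤ β) (hβγ : β < γ) (hγ : γ < π / 2) :
    (Real.cos α * Real.cos β + Real.cos γ) / (Real.cos γ + 1 - Real.sin γ) > 1 := by
  have hπ := Real.pi_pos
  have hγπ : γ ≤ π := by linarith
  have hcγ : 0 < Real.cos γ := Real.cos_pos_of_mem_Ioo ⟨by linarith, hγ⟩
  have hsγ : 0 < Real.sin γ := Real.sin_pos_of_pos_of_lt_pi (by linarith) (by linarith)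
  have hsγ1 : Real.sin γ < 1 := by
    have := Real.sin_sq_add_cos_sq γ
    nlinarith
  have hba : Real.cos β ≤ Real.cos α :=
    Real.cos_le_cos_of_nonneg_of_le_pi (le_of_lt hα) (by linarith) hαβ
  have hgb : Real.cos γ < Real.cos β :=
    Real.cos_lt_cos_of_nonneg_of_le_pi (by linarith) hγπ hβγ
  have hden : 0 < Real.cos γ + 1 - Real.sin γ := by linarith
  rw [gt_iff_lt, lt_div_iff₀ hden]
  have hpy := Real.sin_sq_add_cos_sq γ
  have hkey : Real.cos γ * Real.cos γ < Real.cos α * Real.cos β := by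
    nlinarith [mul_pos hcγ hcγ]
  nlinarith
end

section
/- Let f(α, β, γ) = cos²β + ((cos β cos γ + cos α)/sin γ)² − ((cos α cos β + cos γ)/(cos γ + 1 − sin γ) − 1)². Then for all α, β, γ with 0 < α, β < γ < π/2 and α + β + γ < π, f(α, β, γ) = 0 if and only if f(β, α, γ) = 0. -/
open Real

noncomputable def f (α β γ : ℝ) : ℝ :=
  Real.cos β ^ 2 + ((Real.cos β * Real.cos γ + Real.cos α) / Real.sin γ) ^ 2 -
    ((Real.cos α * Real.cos β + Real.cos γ) / (Real.cos γ + 1 - Real.sin γ) - 1) ^ 2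

theorem zero_set_symmetric (α β γ : ℝ)
    (hα : 0 < α) (hβ : 0 < β) (hαγ : α < γ) (hβγ : β < γ) (hγ : γ < π / 2)
    (hsum : α + β + γ < π) :
    f α β γ = 0 ↔ f β α γ = 0 := by
  have hs : Real.sin γ ≠ 0 :=
    ne_of_gt (Real.sin_pos_of_pos_of_lt_pi (lt_trans hα hαγ)
      (lt_trans hγ (by linarith [Real.pi_pos])))
  have key : f α β γ = f β α γ := by
    unfold f
    have h1 := Real.sin_sq_add_cos_sq γ
    field_simp
    linear_combination (Real.cos β ^ 2 - Real.cos α ^ 2) * h1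
  rw [key]
end

section
/- The function f(α, β, γ) = cos²β + ((cos β cos γ + cos α)/sin γ)² − ((cos α cos β + cos γ)/(cos γ + 1 − sin γ) − 1)² is strictly decreasing in γ on the region F = {(α, β, γ) : 0 < α, β < γ < π/2, α + β + γ < π}: its partial derivative with respect to γ is negative there. -/
open Real

theorem f_decreasing_in_gamma (α β γ : ℝ)
    (hα : 0 < α) (hβ : 0 < β) (hαγ : α < γ) (hβγ : β < γ) (hγ : γ < π / 2)
    (hsum : α + β + γ < π) :
    deriv (fun g => f α β g) γ < 0 := by
  have hπ : (0:ℝ) < π := Real.pi_pos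
  have hγ0 : 0 < γ := hα.trans hαγ
  have hγπ : γ < π := by linarith
  have hsγ : 0 < Real.sin γ := Real.sin_pos_of_pos_of_lt_pi hγ0 hγπ
  have hcγ : 0 < Real.cos γ := Real.cos_pos_of_mem_Ioo ⟨by linarith, hγ⟩
  have hsγ1 : Real.sin γ < 1 := by
    nlinarith [Real.sin_sq_add_cos_sq γ]
  have hD : 0 < Real.cos γ + 1 - Real.sin γ := by linarith
  have hcα : Real.cos γ < Real.cos α :=
    Real.cos_lt_cos_of_nonneg_of_le_pi hα.le (by linarith) hαγ
  have hcβ : Real.cos γ < Real.cos β :=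
    Real.cos_lt_cos_of_nonneg_of_le_pi hβ.le (by linarith) hβγ
  have hcα0 : 0 < Real.cos α := hcγ.trans hcα
  have hcβ0 : 0 < Real.cos β := hcγ.trans hcβ
  -- derivative of f₁
  have hu : HasDerivAt (fun g => (Real.cos β * Real.cos g + Real.cos α) / Real.sin g)
      ((Real.cos β * -Real.sin γ * Real.sin γ -
        (Real.cos β * Real.cos γ + Real.cos α) * Real.cos γ) / Real.sin γ ^ 2) γ := by
    have h1 : HasDerivAt (fun g => Real.cos β * Real.cos g + Real.cos α)
        (Real.cos β * -Real.sin γ) γ :=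
      ((Real.hasDerivAt_cos γ).const_mul (Real.cos β)).add_const _
    exact h1.div (Real.hasDerivAt_sin γ) hsγ.ne'
  -- derivative of f₂
  have hv : HasDerivAt
      (fun g => (Real.cos α * Real.cos β + Real.cos g) / (Real.cos g + 1 - Real.sin g) - 1)
      ((-Real.sin γ * (Real.cos γ + 1 - Real.sin γ) -
        (Real.cos α * Real.cos β + Real.cos γ) * (-Real.sin γ - Real.cos γ)) /
        (Real.cos γ + 1 - Real.sin γ) ^ 2) γ := by
    have h1 : HasDerivAt (fun g => Real.cos α * Real.cos β + Real.cos g) (-Real.sin γ) γ :=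
      (Real.hasDerivAt_cos γ).const_add _
    have h2 : HasDerivAt (fun g => Real.cos g + 1 - Real.sin g)
        (-Real.sin γ - Real.cos γ) γ :=
      ((Real.hasDerivAt_cos γ).add_const 1).sub (Real.hasDerivAt_sin γ)
    exact (h1.div h2 hD.ne').sub_const 1
  set u := (Real.cos β * Real.cos γ + Real.cos α) / Real.sin γ with hu_def
  set u' := (Real.cos β * -Real.sin γ * Real.sin γ -
      (Real.cos β * Real.cos γ + Real.cos α) * Real.cos γ) / Real.sin γ ^ 2 with hu'_def
  set v := (Real.cos α * Real.cos β + Real.cos γ) / (Real.cos γ + 1 - Real.sin γ) - 1 with hv_def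
  set v' := (-Real.sin γ * (Real.cos γ + 1 - Real.sin γ) -
      (Real.cos α * Real.cos β + Real.cos γ) * (-Real.sin γ - Real.cos γ)) /
      (Real.cos γ + 1 - Real.sin γ) ^ 2 with hv'_def
  have hf : HasDerivAt (fun g => f α β g)
      ((2:ℕ) * u ^ 1 * u' - (2:ℕ) * v ^ 1 * v') γ := by
    unfold f
    exact ((hu.pow 2).const_add (Real.cos β ^ 2)).sub (hv.pow 2)
  rw [hf.deriv]
  -- sign facts
  have hu_pos : 0 < u := by
    rw [hu_def]
    exact div_pos (by positivity) hsγ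
  have hu'_neg : u' < 0 := by
    rw [hu'_def]
    apply div_neg_of_neg_of_pos _ (by positivity)
    nlinarith [Real.sin_sq_add_cos_sq γ]
  have hv_pos : 0 < v := by
    rw [hv_def]
    have hN : Real.cos γ + 1 - Real.sin γ < Real.cos α * Real.cos β + Real.cos γ := by
      nlinarith [Real.sin_sq_add_cos_sq γ, mul_pos hcγ hcγ]
    have := (one_lt_div hD).mpr hN
    linarith
  have hv'_pos : 0 < v' := by
    rw [hv'_def]
    apply div_pos _ (by positivity)
    nlinarith [Real.sin_sq_add_cos_sq γ, mul_pos (mul_pos hcα0 hcβ0) (by linarith : (0:ℝ) < Real.sin γ + Real.cos γ)]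
  have t1 : u * u' < 0 := mul_neg_of_pos_of_neg hu_pos hu'_neg
  have t2 : 0 < v * v' := mul_pos hv_pos hv'_pos
  push_cast
  nlinarith [t1, t2]
end

section
/- Let (αᵢ, βᵢ, γᵢ) → (α, β, γ) with αᵢ + βᵢ + γᵢ < π for all i and α + β + γ = π, all angles positive. Let aᵢ, bᵢ be the sides of the hyperbolic triangle with angles αᵢ, βᵢ, γᵢ given by cosh aᵢ = (cos βᵢ cos γᵢ + cos αᵢ)/(sin βᵢ sin γᵢ), etc. Then aᵢ, bᵢ → 0 and the ratio sinh aᵢ / sinh bᵢ = sin αᵢ / sin βᵢ converges to sin α / sin β = a/b, the corresponding ratio of sides in the Euclidean triangle with angles α, β, γ; consequently aᵢ/bᵢ → a/b. -/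
open Real Filter

theorem infinitesimal_triangles (α β γ A B : ℝ) (αs βs γs a b : ℕ → ℝ)
    (hα : 0 < α) (hβ : 0 < β) (hγ : 0 < γ) (hsum : α + β + γ = π)
    (hpos : ∀ i, 0 < αs i ∧ 0 < βs i ∧ 0 < γs i)
    (hsums : ∀ i, αs i + βs i + γs i < π)
    (hlimα : Tendsto αs atTop (nhds α))
    (hlimβ : Tendsto βs atTop (nhds β))
    (hlimγ : Tendsto γs atTop (nhds γ))
    (hapos : ∀ i, 0 < a i) (hbpos : ∀ i, 0 < b i)
    (hcosha : ∀ i, Real.cosh (a i) =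
      (Real.cos (βs i) * Real.cos (γs i) + Real.cos (αs i)) / (Real.sin (βs i) * Real.sin (γs i)))
    (hcoshb : ∀ i, Real.cosh (b i) =
      (Real.cos (αs i) * Real.cos (γs i) + Real.cos (βs i)) / (Real.sin (αs i) * Real.sin (γs i)))
    (hA : 0 < A) (hB : 0 < B) (heuc : A / Real.sin α = B / Real.sin β) :
    Tendsto a atTop (nhds 0) ∧ Tendsto b atTop (nhds 0) ∧
    (∀ i, Real.sinh (a i) / Real.sinh (b i) = Real.sin (αs i) / Real.sin (βs i)) ∧
    Tendsto (fun i => Real.sinh (a i) / Real.sinh (b i)) atTop (nhds (A / B)) ∧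
    Tendsto (fun i => a i / b i) atTop (nhds (A / B)) := by
  -- positivity of limit sines
  have hαπ : α < π := by linarith
  have hβπ : β < π := by linarith
  have hsinα : 0 < Real.sin α := Real.sin_pos_of_pos_of_lt_pi hα hαπ
  have hsinβ : 0 < Real.sin β := Real.sin_pos_of_pos_of_lt_pi hβ hβπ
  -- positivity of sequence sines
  have hsinαs : ∀ i, 0 < Real.sin (αs i) := fun i =>
    Real.sin_pos_of_pos_of_lt_pi (hpos i).1 (by have := hsums i; have := (hpos i).2.1; have := (hpos i).2.2; linarith)
  have hsinβs : ∀ i, 0 < Real.sin (βs i) := fun i =>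
    Real.sin_pos_of_pos_of_lt_pi (hpos i).2.1 (by have := hsums i; have := (hpos i).1; have := (hpos i).2.2; linarith)
  have hsinγs : ∀ i, 0 < Real.sin (γs i) := fun i =>
    Real.sin_pos_of_pos_of_lt_pi (hpos i).2.2 (by have := hsums i; have := (hpos i).1; have := (hpos i).2.1; linarith)
  have hsinha : ∀ i, 0 < Real.sinh (a i) := fun i => Real.sinh_pos_iff.mpr (hapos i)
  have hsinhb : ∀ i, 0 < Real.sinh (b i) := fun i => Real.sinh_pos_iff.mpr (hbpos i)
  -- D i
  set D : ℕ → ℝ := fun i =>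
    Real.cos (αs i) ^ 2 + Real.cos (βs i) ^ 2 + Real.cos (γs i) ^ 2 +
      2 * Real.cos (αs i) * Real.cos (βs i) * Real.cos (γs i) - 1 with hD
  have keyA : ∀ i, (Real.sinh (a i))^2 * (Real.sin (βs i) * Real.sin (γs i)) ^ 2 = D i := by
    intro i
    have h1 : (Real.sinh (a i))^2 = Real.cosh (a i)^2 - 1 := by
      have := Real.cosh_sq (a i); linarith
    have hbγ : Real.sin (βs i) * Real.sin (γs i) ≠ 0 :=
      (mul_pos (hsinβs i) (hsinγs i)).ne'
    have h2 : (Real.sinh (a i))^2 * (Real.sin (βs i) * Real.sin (γs i)) ^ 2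
        = (Real.cos (βs i) * Real.cos (γs i) + Real.cos (αs i))^2
          - (Real.sin (βs i) * Real.sin (γs i))^2 := by
      rw [h1, hcosha i, div_pow, sub_mul, div_mul_cancel₀ _ (pow_ne_zero 2 hbγ)]; ring
    rw [h2, hD]
    have sβ := Real.sin_sq_add_cos_sq (βs i)
    have sγ := Real.sin_sq_add_cos_sq (γs i)
    linear_combination (-(Real.sin (γs i)^2)) * sβ + (Real.cos (βs i)^2 - 1) * sγ
  have keyB : ∀ i, (Real.sinh (b i))^2 * (Real.sin (αs i) * Real.sin (γs i)) ^ 2 = D i := by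
    intro i
    have h1 : (Real.sinh (b i))^2 = Real.cosh (b i)^2 - 1 := by
      have := Real.cosh_sq (b i); linarith
    have hbγ : Real.sin (αs i) * Real.sin (γs i) ≠ 0 :=
      (mul_pos (hsinαs i) (hsinγs i)).ne'
    have h2 : (Real.sinh (b i))^2 * (Real.sin (αs i) * Real.sin (γs i)) ^ 2
        = (Real.cos (αs i) * Real.cos (γs i) + Real.cos (βs i))^2
          - (Real.sin (αs i) * Real.sin (γs i))^2 := by
      rw [h1, hcoshb i, div_pow, sub_mul, div_mul_cancel₀ _ (pow_ne_zero 2 hbγ)]; ring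
    rw [h2, hD]
    have sα := Real.sin_sq_add_cos_sq (αs i)
    have sγ := Real.sin_sq_add_cos_sq (γs i)
    linear_combination (-(Real.sin (γs i)^2)) * sα + (Real.cos (αs i)^2 - 1) * sγ
  -- ratio identity
  have hratio : ∀ i, Real.sinh (a i) / Real.sinh (b i) = Real.sin (αs i) / Real.sin (βs i) := by
    intro i
    have h := (keyA i).trans (keyB i).symm
    -- sinh a * sβ * sγ = sinh b * sα * sγ (both positive, squares equal)
    have h1 : (Real.sinh (a i) * (Real.sin (βs i) * Real.sin (γs i)))^2
        = (Real.sinh (b i) * (Real.sin (αs i) * Real.sin (γs i)))^2 := by ring_nf; nlinarith [h]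
    have hp1 : 0 < Real.sinh (a i) * (Real.sin (βs i) * Real.sin (γs i)) :=
      mul_pos (hsinha i) (mul_pos (hsinβs i) (hsinγs i))
    have hp2 : 0 < Real.sinh (b i) * (Real.sin (αs i) * Real.sin (γs i)) :=
      mul_pos (hsinhb i) (mul_pos (hsinαs i) (hsinγs i))
    have h2 : Real.sinh (a i) * (Real.sin (βs i) * Real.sin (γs i))
        = Real.sinh (b i) * (Real.sin (αs i) * Real.sin (γs i)) := by
      nlinarith [h1, hp1, hp2]
    have h3 : Real.sinh (a i) * Real.sin (βs i) = Real.sinh (b i) * Real.sin (αs i) :=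
      mul_right_cancel₀ (hsinγs i).ne' (by rw [mul_assoc, mul_assoc]; exact h2)
    rw [div_eq_div_iff (hsinhb i).ne' (hsinβs i).ne']
    linear_combination h3
  -- cosh (a i) tendsto 1
  have hcos : Real.cos β * Real.cos γ + Real.cos α = Real.sin β * Real.sin γ := by
    have : α = π - (β + γ) := by linarith
    rw [this, Real.cos_pi_sub, Real.cos_add]; ring
  have hcosb : Real.cos α * Real.cos γ + Real.cos β = Real.sin α * Real.sin γ := by
    have : β = π - (α + γ) := by linarith
    rw [this, Real.cos_pi_sub, Real.cos_add]; ring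
  have hsinγ : 0 < Real.sin γ := Real.sin_pos_of_pos_of_lt_pi hγ (by linarith)
  have hcoshatend : Tendsto (fun i => Real.cosh (a i)) atTop (nhds 1) := by
    have : Tendsto (fun i => (Real.cos (βs i) * Real.cos (γs i) + Real.cos (αs i)) /
        (Real.sin (βs i) * Real.sin (γs i))) atTop
        (nhds ((Real.cos β * Real.cos γ + Real.cos α) / (Real.sin β * Real.sin γ))) := by
      exact Tendsto.div
        (((Real.continuous_cos.continuousAt.tendsto.comp hlimβ).mul
          (Real.continuous_cos.continuousAt.tendsto.comp hlimγ)).add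
          (Real.continuous_cos.continuousAt.tendsto.comp hlimα))
        ((Real.continuous_sin.continuousAt.tendsto.comp hlimβ).mul
          (Real.continuous_sin.continuousAt.tendsto.comp hlimγ))
        (mul_pos hsinβ hsinγ).ne'
    rw [hcos, div_self (mul_pos hsinβ hsinγ).ne'] at this
    exact this.congr (fun i => (hcosha i).symm)
  have hcoshbtend : Tendsto (fun i => Real.cosh (b i)) atTop (nhds 1) := by
    have : Tendsto (fun i => (Real.cos (αs i) * Real.cos (γs i) + Real.cos (βs i)) /
        (Real.sin (αs i) * Real.sin (γs i))) atTop
        (nhds ((Real.cos α * Real.cos γ + Real.cos β) / (Real.sin α * Real.sin γ))) := by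
      exact Tendsto.div
        (((Real.continuous_cos.continuousAt.tendsto.comp hlimα).mul
          (Real.continuous_cos.continuousAt.tendsto.comp hlimγ)).add
          (Real.continuous_cos.continuousAt.tendsto.comp hlimβ))
        ((Real.continuous_sin.continuousAt.tendsto.comp hlimα).mul
          (Real.continuous_sin.continuousAt.tendsto.comp hlimγ))
        (mul_pos hsinα hsinγ).ne'
    rw [hcosb, div_self (mul_pos hsinα hsinγ).ne'] at this
    exact this.congr (fun i => (hcoshb i).symm)
  -- sinh a i tendsto 0, then a tendsto 0
  have sinh_eq : ∀ x : ℝ, 0 ≤ x → Real.sinh x = Real.sqrt (Real.cosh x ^ 2 - 1) := by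
    intro x hx
    have h1 : Real.cosh x ^ 2 - 1 = Real.sinh x ^ 2 := by
      have := Real.cosh_sq x; linarith
    rw [h1, Real.sqrt_sq (Real.sinh_nonneg_iff.mpr hx)]
  have tendsto_of_cosh : ∀ (f : ℕ → ℝ), (∀ i, 0 < f i) →
      Tendsto (fun i => Real.cosh (f i)) atTop (nhds 1) → Tendsto f atTop (nhds 0) := by
    intro f hf hc
    have hs : Tendsto (fun i => Real.sinh (f i)) atTop (nhds 0) := by
      have : Tendsto (fun i => Real.sqrt (Real.cosh (f i) ^ 2 - 1)) atTop
          (nhds (Real.sqrt ((1:ℝ)^2 - 1))) :=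
        (Real.continuous_sqrt.continuousAt.tendsto.comp (((hc.pow 2)).sub tendsto_const_nhds))
      simp only [one_pow, sub_self, Real.sqrt_zero] at this
      exact this.congr (fun i => (sinh_eq (f i) (hf i).le).symm)
    refine squeeze_zero (fun i => (hf i).le) (fun i => ?_) hs
    exact (Real.self_lt_sinh_iff.mpr (hf i)).le
  have ha0 : Tendsto a atTop (nhds 0) := tendsto_of_cosh a hapos hcoshatend
  have hb0 : Tendsto b atTop (nhds 0) := tendsto_of_cosh b hbpos hcoshbtend
  -- A/B = sin α / sin β
  have hAB : A / B = Real.sin α / Real.sin β := by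
    rw [div_eq_div_iff hsinα.ne' hsinβ.ne'] at heuc
    rw [div_eq_div_iff hB.ne' hsinβ.ne']
    linarith
  -- ratio tendsto
  have hratiotend : Tendsto (fun i => Real.sinh (a i) / Real.sinh (b i)) atTop (nhds (A / B)) := by
    have : Tendsto (fun i => Real.sin (αs i) / Real.sin (βs i)) atTop
        (nhds (Real.sin α / Real.sin β)) :=
      (Real.continuous_sin.continuousAt.tendsto.comp hlimα).div
        (Real.continuous_sin.continuousAt.tendsto.comp hlimβ) hsinβ.ne'
    rw [← hAB] at this
    exact this.congr (fun i => (hratio i).symm)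
  -- sinh x / x → 1 trick
  have slope_tendsto : ∀ (f : ℕ → ℝ), (∀ i, 0 < f i) → Tendsto f atTop (nhds 0) →
      Tendsto (fun i => Real.sinh (f i) / f i) atTop (nhds 1) := by
    intro f hf h0
    have hd : Tendsto (slope Real.sinh 0) (nhdsWithin 0 {0}ᶜ) (nhds 1) := by
      have := hasDerivAt_iff_tendsto_slope.mp (Real.hasDerivAt_sinh 0)
      rwa [Real.cosh_zero] at this
    have hf' : Tendsto f atTop (nhdsWithin 0 {0}ᶜ) :=
      tendsto_nhdsWithin_of_tendsto_nhds_of_eventually_within f h0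
        (Eventually.of_forall (fun i => (hf i).ne'))
    have := hd.comp hf'
    refine this.congr (fun i => ?_)
    simp only [slope, Function.comp, sub_zero, Real.sinh_zero, vsub_eq_sub]
    rw [smul_eq_mul, div_eq_inv_mul]
  have ra := slope_tendsto a hapos ha0
  have rb := slope_tendsto b hbpos hb0
  have hfin : Tendsto (fun i => a i / b i) atTop (nhds (A / B)) := by
    have h1 : Tendsto (fun i => Real.sinh (a i) / Real.sinh (b i) *
        (Real.sinh (b i) / b i) / (Real.sinh (a i) / a i)) atTop
        (nhds (A / B * 1 / 1)) := (hratiotend.mul rb).div ra one_ne_zero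
    rw [mul_one, div_one] at h1
    refine h1.congr (fun i => ?_)
    have := (hapos i).ne'
    have := (hbpos i).ne'
    have := (hsinha i).ne'
    have := (hsinhb i).ne'
    field_simp
  exact ⟨ha0, hb0, hratio, hratiotend, hfin⟩
end
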